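/- Let X_1,...,X_k, S be linearly independent with Δ(X,S) < 0 and B(S,S) = 0 (S isotropic). Then every nonzero X ∈ span(X_1,...,X_k,S) ∩ S^⊥ that is not a multiple of S satisfies B(X,X) > 0, and Δ(X,S) := B(X,X)B(S,S) − B(X,S)² = 0 for all such X (i.e. X admits no projection onto the isotropic cone along S other than S itself). -/

import Mathlib

/-- The Lie form on ℝ^{n+3}: a symmetric bilinear form of signature (n+1, 2). -/
noncomputable def lieForm (n : ℕ) : LinearMap.BilinForm ℝ (Fin (n + 3) → ℝ) :=
  Matrix.toBilin' (Matrix.diagonal fun i => if (i : ℕ) < n + 1 then 1 else -1)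

/-!
The Lie form has only two negative directions, so it is negative semidefinite on no
three-dimensional subspace. Hence the Gram matrix `G` of `Z` has at most two negative
eigenvalues, and since `det G < 0` it has exactly one: the form is positive definite on a
hyperplane `ker f` of `span Z`. If `v ⊥ S` had `B(v,v) ≤ 0` without being a multiple of `S`,
then `f S • v - f v • S` would be a nonzero vector of `ker f` of square `f(S)² B(v,v) ≤ 0`
(and `f S ≠ 0` because `S` is isotropic).
-/

open Matrix
open LinearMap (BilinForm)

namespace LinearMap.BilinForm

variable {V W : Type*} [AddCommGroup V] [Module ℝ V] [AddCommGroup W] [Module ℝ W]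

/-- `B` is negative semidefinite on no three-dimensional subspace. -/
def NoNonposTriple (B : BilinForm ℝ V) : Prop :=
  ∀ u : Fin 3 → V, LinearIndependent ℝ u →
    ∃ a : Fin 3 → ℝ, 0 < B (∑ p, a p • u p) (∑ p, a p • u p)

lemma NoNonposTriple.comp {B : BilinForm ℝ W} (hB : B.NoNonposTriple) {T : V →ₗ[ℝ] W}
    (hT : Function.Injective T) : (B.comp T T).NoNonposTriple := fun u hu => by
  obtain ⟨a, ha⟩ := hB (T ∘ u) (hu.map' T (LinearMap.ker_eq_bot.mpr hT))
  exact ⟨a, by simpa [map_sum] using ha⟩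

lemma exists_eq_smul_of_isotropic {B : BilinForm ℝ V} (hB : B.IsSymm) {f : V →ₗ[ℝ] ℝ}
    (hf : ∀ y, f y = 0 → y ≠ 0 → 0 < B y y) {s v : V} (hs : s ≠ 0) (hss : B s s = 0)
    (hsv : B s v = 0) (hvv : B v v ≤ 0) : ∃ c : ℝ, v = c • s := by
  have hfs : f s ≠ 0 := fun h => (hf s h hs).ne' hss
  refine ⟨f v / f s, ?_⟩
  by_contra hne
  set y := f s • v - f v • s
  have hfy : f y = 0 := by simp only [y, map_sub, map_smul, smul_eq_mul]; ring
  have hy : y ≠ 0 := by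
    intro h
    apply hne
    rw [div_eq_inv_mul, mul_smul, ← sub_eq_zero.mp h, smul_smul, inv_mul_cancel₀ hfs, one_smul]
  have hByy : B y y = f s ^ 2 * B v v := by
    simp only [y, map_sub, map_smul, LinearMap.sub_apply, LinearMap.smul_apply, smul_eq_mul,
      hss, hsv, hB.eq v s]
    ring
  nlinarith [hf y hfy hy, sq_nonneg (f s)]

lemma toMatrix'_comp_linearCombination {ι : Type*} [Fintype ι] [DecidableEq ι]
    (B : BilinForm ℝ V) (Z : ι → V) :
    toMatrix' (B.comp (Fintype.linearCombination ℝ Z) (Fintype.linearCombination ℝ Z)) =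
      Matrix.of fun i j => B (Z i) (Z j) := by
  ext i j
  simp [Fintype.linearCombination_apply_single]

end LinearMap.BilinForm

lemma exists_forall_ne_pos_of_prod_neg {ι : Type*} [Fintype ι] {μ : ι → ℝ}
    (hprod : ∏ i, μ i < 0)
    (hno : ∀ i j l, i ≠ j → i ≠ l → j ≠ l → μ i < 0 → μ j < 0 → 0 ≤ μ l) :
    ∃ i₀, ∀ i, i ≠ i₀ → 0 < μ i := by
  classical
  obtain ⟨i₀, hi₀⟩ : ∃ i, μ i < 0 := by
    by_contra! h
    exact (Finset.prod_nonneg fun i _ => h i).not_gt hprod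
  refine ⟨i₀, fun j hj => ?_⟩
  have hμj : μ j ≠ 0 := fun h => by
    rw [Finset.prod_eq_zero (Finset.mem_univ j) h] at hprod
    exact hprod.false
  refine lt_of_le_of_ne (not_lt.mp fun hneg => ?_) hμj.symm
  have hrest : 0 ≤ ∏ l ∈ (Finset.univ.erase i₀).erase j, μ l :=
    Finset.prod_nonneg fun l hl => by
      obtain ⟨hlj, hl⟩ := Finset.mem_erase.mp hl
      exact hno i₀ j l hj.symm (Finset.ne_of_mem_erase hl).symm hlj.symm hi₀ hneg
  rw [← Finset.mul_prod_erase _ μ (Finset.mem_univ i₀),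
    ← Finset.mul_prod_erase _ μ (Finset.mem_erase.mpr ⟨hj, Finset.mem_univ j⟩)] at hprod
  nlinarith [mul_pos_of_neg_of_neg hi₀ hneg]

namespace Matrix

variable {ι : Type*} [Fintype ι] [DecidableEq ι]

lemma toBilin'_diagonal_apply_self (μ a : ι → ℝ) :
    toBilin' (diagonal μ) a a = ∑ i, μ i * a i ^ 2 := by
  simp only [toBilin'_apply', dotProduct, mulVec_diagonal]
  exact Finset.sum_congr rfl fun i _ => by ring

lemma toBilin'_diagonal_sum_single {m : Type*} [Fintype m] (μ : ι → ℝ) {σ : m → ι}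
    (hσ : Function.Injective σ) (a : m → ℝ) :
    toBilin' (diagonal μ) (∑ p, a p • Pi.single (σ p) 1) (∑ p, a p • Pi.single (σ p) 1) =
      ∑ p, μ (σ p) * a p ^ 2 := by
  classical
  simp only [map_sum, map_smul, LinearMap.coe_sum, LinearMap.coe_smul, Finset.sum_apply,
    Pi.smul_apply, toBilin'_single, diagonal_apply, hσ.eq_iff, smul_eq_mul, mul_ite, mul_zero,
    Finset.sum_ite_eq', Finset.mem_univ, if_true]
  exact Finset.sum_congr rfl fun p _ => by ring

lemma exists_toBilin'_diagonal_posDef_on_coordHyperplane {μ : ι → ℝ} (hprod : ∏ i, μ i < 0)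
    (h3 : (toBilin' (diagonal μ)).NoNonposTriple) :
    ∃ i₀, ∀ a : ι → ℝ, a i₀ = 0 → a ≠ 0 → 0 < toBilin' (diagonal μ) a a := by
  have hno (i j l) (hij : i ≠ j) (hil : i ≠ l) (hjl : j ≠ l) (hi : μ i < 0) (hj : μ j < 0) :
      0 ≤ μ l := by
    by_contra! hl
    have hσ : Function.Injective ![i, j, l] := by
      intro p q
      fin_cases p <;> fin_cases q <;> simp [hij, hil, hjl, hij.symm, hil.symm, hjl.symm]
    obtain ⟨a, ha⟩ := h3 _ ((Pi.basisFun ℝ ι).linearIndependent.comp _ hσ)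
    simp only [Function.comp_apply, Pi.basisFun_apply] at ha
    rw [toBilin'_diagonal_sum_single μ hσ] at ha
    simp only [Fin.sum_univ_three, Fin.isValue, cons_val_zero, cons_val_one, cons_val] at ha
    nlinarith [mul_nonpos_of_nonpos_of_nonneg hi.le (sq_nonneg (a 0)),
      mul_nonpos_of_nonpos_of_nonneg hj.le (sq_nonneg (a 1)),
      mul_nonpos_of_nonpos_of_nonneg hl.le (sq_nonneg (a 2))]
  obtain ⟨i₀, hpos⟩ := exists_forall_ne_pos_of_prod_neg hprod hno
  refine ⟨i₀, fun a ha0 ha => ?_⟩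
  obtain ⟨i, hi⟩ := Function.ne_iff.mp ha
  have hii₀ : i ≠ i₀ := by rintro rfl; exact hi ha0
  rw [toBilin'_diagonal_apply_self]
  refine Finset.sum_pos' (fun j _ => ?_) ⟨i, Finset.mem_univ i,
    mul_pos (hpos i hii₀) (pow_two_pos_of_ne_zero hi)⟩
  by_cases hj : j = i₀
  · simp [hj, ha0]
  · exact mul_nonneg (hpos j hj).le (sq_nonneg _)

end Matrix

namespace LinearMap.BilinForm

lemma exists_posDef_on_hyperplane_of_det_neg {ι : Type*} [Fintype ι] [DecidableEq ι]
    {B : BilinForm ℝ (ι → ℝ)} (hB : B.IsSymm) (hdet : (toMatrix' B).det < 0)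
    (h3 : B.NoNonposTriple) :
    ∃ f : (ι → ℝ) →ₗ[ℝ] ℝ, ∀ y, f y = 0 → y ≠ 0 → 0 < B y y := by
  have hG : (toMatrix' B).IsHermitian := by
    ext i j
    simp [hB.eq (Pi.single i 1)]
  let e := UnitaryGroup.toLinearEquiv hG.eigenvectorUnitary
  have hdiag : B.comp e e = toBilin' (diagonal hG.eigenvalues) := by
    rw [← toBilin'_toMatrix' (B.comp _ _)]
    congr 1
    have hU := hG.conjStarAlgAut_star_eigenvectorUnitary
    have he : LinearMap.toMatrix' e.toLinearMap = hG.eigenvectorUnitary := toMatrix'_toLin' _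
    simp only [Unitary.conjStarAlgAut_apply, Unitary.coe_star, star_star,
      RCLike.ofReal_real_eq_id, Function.id_comp] at hU
    rw [toMatrix'_comp, he, ← hU, star_eq_conjTranspose, conjTranspose_eq_transpose_of_trivial]
  obtain ⟨i₀, hi₀⟩ := exists_toBilin'_diagonal_posDef_on_coordHyperplane
    (by simpa [hG.det_eq_prod_eigenvalues] using hdet) (hdiag ▸ h3.comp e.injective)
  refine ⟨LinearMap.proj i₀ ∘ₗ e.symm.toLinearMap, fun y hy hy0 => ?_⟩
  have := hi₀ (e.symm y) hy (by simpa using hy0)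
  rwa [← hdiag, comp_apply, LinearEquiv.coe_coe, e.apply_symm_apply] at this

end LinearMap.BilinForm

lemma lieForm_apply (n : ℕ) (x y : Fin (n + 3) → ℝ) :
    lieForm n x y = ∑ i : Fin (n + 3), (if (i : ℕ) < n + 1 then 1 else -1) * x i * y i := by
  simp only [lieForm, toBilin'_apply', dotProduct, mulVec_diagonal]
  exact Finset.sum_congr rfl fun i _ => by ring

lemma lieForm_isSymm (n : ℕ) : (lieForm n).IsSymm :=
  ⟨fun x y => by simp only [lieForm_apply]; exact Finset.sum_congr rfl fun i _ => by ring⟩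

lemma lieForm_self_pos {n : ℕ} {x : Fin (n + 3) → ℝ} (hx : x ≠ 0)
    (htail : ∀ i : Fin (n + 3), n + 1 ≤ (i : ℕ) → x i = 0) : 0 < lieForm n x x := by
  have hsq : lieForm n x x = ∑ i, x i ^ 2 := by
    rw [lieForm_apply]
    refine Finset.sum_congr rfl fun i _ => ?_
    split_ifs with hi
    · ring
    · simp [htail i (not_lt.mp hi)]
  obtain ⟨i, hi⟩ := Function.ne_iff.mp hx
  rw [hsq]
  exact Finset.sum_pos' (fun j _ => sq_nonneg _)
    ⟨i, Finset.mem_univ i, pow_two_pos_of_ne_zero hi⟩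

lemma lieForm_noNonposTriple (n : ℕ) : (lieForm n).NoNonposTriple := by
  intro u hu
  let tail : (Fin (n + 3) → ℝ) →ₗ[ℝ] Fin 2 → ℝ :=
    LinearMap.pi fun j => LinearMap.proj ⟨n + 1 + j, by omega⟩
  have hker : LinearMap.ker (tail ∘ₗ Fintype.linearCombination ℝ u) ≠ ⊥ :=
    LinearMap.ker_ne_bot_of_finrank_lt (by simp)
  obtain ⟨a, ha, ha0⟩ := (Submodule.ne_bot_iff _).mp hker
  have hinj := linearIndependent_iff_injective_fintypeLinearCombination.mp hu
  refine ⟨a, ?_⟩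
  rw [← Fintype.linearCombination_apply]
  refine lieForm_self_pos (fun h => ha0 ((injective_iff_map_eq_zero _).mp hinj a h))
    fun i hi => ?_
  have := congrFun ha ⟨i - (n + 1), by omega⟩
  simp only [tail, LinearMap.comp_apply, LinearMap.pi_apply, LinearMap.proj_apply,
    Pi.zero_apply] at this
  rwa [show (⟨n + 1 + (i - (n + 1)), _⟩ : Fin (n + 3)) = i from Fin.ext (by simp; omega)]
    at this

/-- Let `X_1,...,X_k, S` be linearly independent with Gram determinant
`Δ(X,S) < 0` and `S` isotropic (`B(S,S) = 0`). Then every vector `v` of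
`span(X,S) ∩ S^⊥` which is not a scalar multiple of `S` satisfies `B(v,v) > 0` and
`B(v,v)B(S,S) − B(v,S)² = 0` (so `v` admits no projection onto the isotropic cone along
`S` other than `S` itself). -/
theorem stmt_19 {n k : ℕ} (X : Fin k → (Fin (n + 3) → ℝ)) (S : Fin (n + 3) → ℝ)
    (Z : Fin (k + 1) → (Fin (n + 3) → ℝ)) (hZ : Z = Fin.snoc X S)
    (hind : LinearIndependent ℝ Z)
    (hdet : (Matrix.of fun i j => lieForm n (Z i) (Z j)).det < 0)
    (hSS : lieForm n S S = 0) :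
    ∀ v ∈ Submodule.span ℝ (insert S (Set.range X)),
      lieForm n S v = 0 → (∀ c : ℝ, v ≠ c • S) →
      0 < lieForm n v v ∧
      lieForm n v v * lieForm n S S - (lieForm n v S) ^ 2 = 0 := by
  intro v hv hSv hvS
  have hvS0 : lieForm n v S = 0 := by rwa [(lieForm_isSymm n).eq]
  refine ⟨not_le.mp fun hvv => ?_, by rw [hSS, hvS0]; ring⟩
  set T := Fintype.linearCombination ℝ Z
  have hsymm : ((lieForm n).comp T T).IsSymm := ⟨fun x y => (lieForm_isSymm n).eq _ _⟩
  obtain ⟨f, hf⟩ := LinearMap.BilinForm.exists_posDef_on_hyperplane_of_det_neg hsymm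
    (by rwa [LinearMap.BilinForm.toMatrix'_comp_linearCombination])
    ((lieForm_noNonposTriple n).comp
      (linearIndependent_iff_injective_fintypeLinearCombination.mp hind))
  rw [← Fin.range_snoc, ← hZ, ← Fintype.range_linearCombination] at hv
  obtain ⟨a, rfl⟩ := hv
  have hTS : T (Pi.single (Fin.last k) 1) = S := by
    simp [T, Fintype.linearCombination_apply_single, hZ]
  obtain ⟨c, rfl⟩ := LinearMap.BilinForm.exists_eq_smul_of_isotropic hsymm hf
    (Pi.single_ne_zero_iff.mpr one_ne_zero) (by rwa [LinearMap.BilinForm.comp_apply, hTS])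
    (by rwa [LinearMap.BilinForm.comp_apply, hTS]) hvv
  exact hvS c (by rw [map_smul, hTS])
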